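/- arXiv:2601.19764 — 2 statements merged into one kernel-verified Lean document; each statement's English description precedes it below -/
import Mathlib

section
/- Let p be a prime. Let G and H be groups and let φ : G → H be a surjective group homomorphism whose kernel is contained in the center of G (i.e., G is a central extension of H). If H is a finite p-group, then the commutator subgroup [G, G] is a finite p-group. -/
/-!
Since `ker φ ≤ Z(G)`, the group `G ⧸ Z(G)` is a quotient of `H`, hence a finite `p`-group.
A commutator `⁅a, b⁆` depends only on the classes of `a` and `b` modulo `Z(G)`, so `G` has
finitely many commutators, and Schur's bound `|G'| ∣ [G : Z(G)] ^ N` then shows that `G'` is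
a finite `p`-group.
-/

open scoped commutatorElement

namespace Subgroup

variable {G : Type*} [Group G]

theorem commutatorElement_mul_left_of_mem_center {z : G} (hz : z ∈ center G) (a b : G) :
    ⁅a * z, b⁆ = ⁅a, b⁆ := by
  have hzb : z * b = b * z := (mem_center_iff.mp hz b).symm
  calc ⁅a * z, b⁆ = a * (z * b * z⁻¹) * a⁻¹ * b⁻¹ := by group
    _ = ⁅a, b⁆ := by rw [hzb, mul_inv_cancel_right, commutatorElement_def]

theorem commutatorElement_mul_right_of_mem_center {w : G} (hw : w ∈ center G) (a b : G) :
    ⁅a, b * w⁆ = ⁅a, b⁆ := by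
  rw [← commutatorElement_inv, commutatorElement_mul_left_of_mem_center hw, commutatorElement_inv]

instance finite_commutatorSet_of_finiteIndex_center [FiniteIndex (center G)] :
    Finite (commutatorSet G) := by
  refine (Set.finite_range fun q : (G ⧸ center G) × (G ⧸ center G) => ⁅q.1.out, q.2.out⁆).subset ?_
  rintro _ ⟨a, b, rfl⟩
  obtain ⟨z, hz⟩ := QuotientGroup.mk_out_eq_mul (center G) a
  obtain ⟨w, hw⟩ := QuotientGroup.mk_out_eq_mul (center G) b
  refine ⟨(a, b), ?_⟩
  simp only [hz, hw, commutatorElement_mul_left_of_mem_center z.2,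
    commutatorElement_mul_right_of_mem_center w.2]

theorem isPGroup_commutator_of_isPGroup_quotient_center {p : ℕ} [FiniteIndex (center G)]
    (hp : IsPGroup p (G ⧸ center G)) : IsPGroup p (_root_.commutator G) := by
  obtain ⟨n, hn⟩ := hp.exists_card_dvd_pow
  rw [← index_eq_card] at hn
  exact .of_card_dvd_pow <| (card_commutator_dvd_index_center_pow G).trans <|
    (pow_dvd_pow_of_dvd hn _).trans (pow_mul p n _).symm.dvd

end Subgroup

theorem QuotientGroup.exists_surjective_of_ker_le {G H : Type*} [Group G] [Group H]
    {φ : G →* H} (hφ : Function.Surjective φ) {N : Subgroup G} [N.Normal] (h : φ.ker ≤ N) :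
    ∃ ψ : H →* G ⧸ N, Function.Surjective ψ :=
  ⟨(map φ.ker N (MonoidHom.id G) h).comp (quotientKerEquivOfSurjective φ hφ).symm.toMonoidHom,
    (map_surjective_of_surjective _ _ _ mk_surjective h).comp
      (quotientKerEquivOfSurjective φ hφ).symm.surjective⟩

theorem commutator_finite_pGroup_of_central_extension_general
    {p : ℕ} {G H : Type*} [Group G] [Group H] (φ : G →* H)
    (hsurj : Function.Surjective φ) (hker : φ.ker ≤ Subgroup.center G)
    (hHfin : Finite H) (hHp : IsPGroup p H) :
    Finite ↥(commutator G) ∧ IsPGroup p ↥(commutator G) := by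
  obtain ⟨ψ, hψ⟩ := QuotientGroup.exists_surjective_of_ker_le hsurj hker
  have : Finite (G ⧸ Subgroup.center G) := Finite.of_surjective ψ hψ
  have : (Subgroup.center G).FiniteIndex := Subgroup.finiteIndex_of_finite_quotient
  exact ⟨inferInstance, Subgroup.isPGroup_commutator_of_isPGroup_quotient_center
    (hHp.of_surjective ψ hψ)⟩

/-- If `φ : G → H` is a surjective group homomorphism whose kernel is contained in the center
of `G` (i.e. `G` is a central extension of `H`) and `H` is a finite `p`-group, then the
commutator subgroup `[G, G]` is a finite `p`-group. -/
theorem commutator_finite_pGroup_of_central_extension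
    {p : ℕ} (hp : p.Prime) {G H : Type*} [Group G] [Group H] (φ : G →* H)
    (hsurj : Function.Surjective φ) (hker : φ.ker ≤ Subgroup.center G)
    (hHfin : Finite H) (hHp : IsPGroup p H) :
    Finite ↥(commutator G) ∧ IsPGroup p ↥(commutator G) :=
  commutator_finite_pGroup_of_central_extension_general φ hsurj hker hHfin hHp
end

section
/- Let H be a Noetherian group. Suppose that for every group G admitting a surjective group homomorphism φ : G → [H, H] onto the commutator subgroup of H with kernel contained in the center of G, the commutator subgroup [G, G] is Noetherian. Then the Schur multiplier H₂(H, ℤ) of H is a finitely generated abelian group. -/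
/-!
By Hopf's formula, `SchurMultiplier H` is the subgroup `M = (R ⊓ [F, F]) / [F, R]` of
`Q = F / [F, R]`, and `π : Q → H` is a central extension with `M ≤ [Q, Q] ⊓ ker π`.
Lifting finitely many generators of `H` gives a finitely generated `W ≤ Q` with `W ⊔ ker π = Q`;
as `ker π` is central, `[Q, Q] = [W, W]`, so `M` is a central subgroup of `[W, W]`.
Now `W ⊓ π⁻¹[H, H]` is a central extension of `[H, H]` whose derived subgroup contains `W''`,
so by hypothesis `M ⊓ W''` is finitely generated. The image of `M` in `W' / W''` is finitely
generated as well: by Hall's argument `W' / W''` is a finitely generated module over the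
Noetherian ring `ℤ[Wᵃᵇ]`, and the image of the central subgroup `M` consists of invariants.
-/

universe u

/-- A group is *Noetherian* if every subgroup is finitely generated. -/
def IsNoetherianGroup (G : Type*) [Group G] : Prop := ∀ K : Subgroup G, K.FG

/-- The *Schur multiplier* `H₂(G, ℤ)` of a group `G`, via Hopf's formula:
`H₂(G, ℤ) ≅ (R ⊓ [F, F]) / ⁅F, R⁆`, where `F` is the free group on the underlying set of `G`
and `R` is the kernel of the canonical projection `F → G`. -/
def SchurMultiplier (G : Type*) [Group G] :=
  ((FreeGroup.lift (id : G → G)).ker ⊓ commutator (FreeGroup G)).map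
    (QuotientGroup.mk' ⁅(⊤ : Subgroup (FreeGroup G)), (FreeGroup.lift (id : G → G)).ker⁆)

open scoped commutatorElement

namespace Subgroup

variable {G G' : Type*} [Group G] [Group G']

theorem FG.map {K : Subgroup G} (hK : K.FG) (f : G →* G') : (K.map f).FG := by
  classical
  obtain ⟨S, hS⟩ := hK
  exact ⟨S.image f, by rw [Finset.coe_image, ← MonoidHom.map_closure, hS]⟩

theorem inf_subgroupOf (H H' K : Subgroup G) :
    (H ⊓ H').subgroupOf K = H.subgroupOf K ⊓ H'.subgroupOf K :=
  comap_inf _ _ _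

theorem fg_subgroupOf_iff {H K : Subgroup G} (h : H ≤ K) : (H.subgroupOf K).FG ↔ H.FG := by
  refine ⟨fun hH => ?_, fun hH => ?_⟩
  · simpa [map_subgroupOf_eq_of_le h] using hH.map K.subtype
  · rw [← Group.fg_iff_subgroup_fg] at hH ⊢
    exact Group.fg_of_surjective (f := (subgroupOfEquivOfLe h).symm.toMonoidHom)
      (subgroupOfEquivOfLe h).symm.surjective

theorem fg_of_fg_map_of_fg_inf_ker (f : G →* G') {A : Subgroup G} (hmap : (A.map f).FG)
    (hker : (A ⊓ f.ker).FG) : A.FG := by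
  obtain ⟨T, hT⟩ := hmap
  have hT_mem (t : (T : Set G')) : ∃ a ∈ A, f a = t := mem_map.1 (hT ▸ subset_closure t.2)
  choose s hsA hfs using hT_mem
  have hsA' : closure (Set.range s) ≤ A := (closure_le A).2 (Set.range_subset_iff.2 hsA)
  have hmap : (closure (Set.range s)).map f = A.map f := by
    rw [MonoidHom.map_closure, ← Set.range_comp, ← hT]
    congr 1
    ext t
    simp [hfs]
  have hA : A = closure (Set.range s) ⊔ A ⊓ f.ker := by
    refine le_antisymm (fun a ha => ?_) (sup_le hsA' inf_le_left)
    have : a ∈ closure (Set.range s) ⊔ f.ker := by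
      rw [← comap_map_eq, hmap]; exact mem_comap.2 (mem_map_of_mem f ha)
    obtain ⟨y, hy, z, hz, rfl⟩ := mem_sup_of_normal_right.1 this
    exact mul_mem_sup hy ⟨by simpa using A.mul_mem (A.inv_mem (hsA' hy)) ha, hz⟩
  rw [hA]
  exact FG.sup ((fg_iff _).2 ⟨_, rfl, Set.finite_range s⟩) hker

theorem commutator_le_of_closure_eq_top {S : Set G} (hS : closure S = ⊤) {N : Subgroup G}
    [N.Normal] (h : ∀ a ∈ S, ∀ b ∈ S, ⁅a, b⁆ ∈ N) : _root_.commutator G ≤ N := by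
  set T := QuotientGroup.mk' N '' S
  have hT : closure T = ⊤ := by
    rw [← MonoidHom.map_closure, hS, map_top_of_surjective _ (QuotientGroup.mk'_surjective N)]
  have hTT : T ⊆ centralizer T := by
    rintro _ ⟨b, hb, rfl⟩ _ ⟨a, ha, rfl⟩
    rw [← commutatorElement_eq_one_iff_mul_comm, ← map_commutatorElement]
    exact (QuotientGroup.eq_one_iff _).2 (h a ha b hb)
  have hcomm : closure T ≤ centralizer (closure T : Set _) := by
    rw [centralizer_closure]; exact (closure_le _).2 hTT
  rw [hT] at hcomm
  rw [_root_.commutator_def, commutator_le]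
  intro a _ b _
  rw [← QuotientGroup.eq_one_iff, ← QuotientGroup.mk'_apply, map_commutatorElement,
    commutatorElement_eq_one_iff_mul_comm]
  exact (mem_centralizer_iff.1 (hcomm (mem_top _)) _ (mem_top _)).symm

end Subgroup

def MulAut.abelianizationCongrHom (A : Type*) [Group A] :
    MulAut A →* MulAut (Abelianization A) where
  toFun := MulEquiv.abelianizationCongr
  map_one' := abelianizationCongr_refl
  map_mul' e₁ e₂ := (abelianizationCongr_trans e₂ e₁).symm

/-- On invariant vectors `k[G]` acts through `k`, so `k[G]`-generators of `Y` span it over `k`. -/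
theorem Representation.fg_of_le_invariants {k G V : Type*} [CommRing k] [Group G]
    [AddCommGroup V] [Module k V] (ρ : Representation k G V)
    [IsNoetherian (MonoidAlgebra k G) ρ.asModule] {Y : Submodule k V} (hY : Y ≤ ρ.invariants) :
    Y.FG := by
  let toSubrep (Y : Submodule k V) (hY : Y ≤ ρ.invariants) : Subrepresentation ρ :=
    ⟨Y, fun g v hv => by rwa [(ρ.mem_invariants v).1 (hY hv) g]⟩
  obtain ⟨s, hs⟩ := IsNoetherian.noetherian (toSubrep Y hY).asSubmodule
  let t : Finset V := s
  have hsY : Submodule.span k (t : Set V) ≤ Y := Submodule.span_le.2 fun v hv =>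
    (hs ▸ Submodule.subset_span hv : v ∈ (toSubrep Y hY).asSubmodule)
  refine ⟨t, le_antisymm hsY fun v hv => ?_⟩
  have hle : (toSubrep Y hY).asSubmodule ≤ (toSubrep _ (hsY.trans hY)).asSubmodule := by
    rw [← hs, Submodule.span_le]
    exact fun v hv => (Submodule.subset_span hv : v ∈ Submodule.span k (t : Set V))
  exact hle hv

namespace Abelianization

variable (G : Type*) [Group G]

/-- Inner automorphisms of `[G, G]` act trivially on its abelianization, so conjugation by `G`
descends to an action of `Gᵃᵇ`. -/
noncomputable def conjCommutator : Abelianization G →* MulAut (Abelianization (commutator G)) :=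
  QuotientGroup.lift (commutator G) ((MulAut.abelianizationCongrHom _).comp MulAut.conjNormal) <| by
    intro c hc
    rw [MonoidHom.mem_ker]
    ext x
    induction x using QuotientGroup.induction_on with | H y => ?_
    show of (⟨c, hc⟩ * y * (⟨c, hc⟩ : commutator G)⁻¹) = of y
    rw [map_mul, map_mul, map_inv, mul_comm, inv_mul_cancel_left]

noncomputable instance : MulDistribMulAction (Abelianization G) (Abelianization (commutator G)) :=
  MulDistribMulAction.compHom _ (conjCommutator G)

noncomputable abbrev commutatorRep :
    Representation ℤ (Abelianization G) (Additive (Abelianization (commutator G))) :=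
  Representation.ofMulDistribMulAction _ _

variable {G}

instance [Group.FG G] : Group.FG (Abelianization G) :=
  Group.fg_of_surjective (f := of) QuotientGroup.mk_surjective

instance [Group.FG G] : IsNoetherianRing (MonoidAlgebra ℤ (Abelianization G)) :=
  Algebra.FiniteType.isNoetherianRing ℤ _

/-- Hall: the classes of commutators of generators span, because the elements of `[G, G]` whose
class lies in their span form a normal subgroup modulo which the generators commute. -/
instance [hG : Group.FG G] :
    Module.Finite (MonoidAlgebra ℤ (Abelianization G)) (commutatorRep G).asModule := by
  classical
  obtain ⟨S, hS⟩ := hG.out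
  let gen : G × G → Additive (Abelianization (commutator G)) := fun p =>
    Additive.ofMul (of ⟨⁅p.1, p.2⁆,
      Subgroup.commutator_mem_commutator (Subgroup.mem_top _) (Subgroup.mem_top _)⟩)
  let U : Submodule (MonoidAlgebra ℤ (Abelianization G)) (commutatorRep G).asModule :=
    Submodule.span _ ((S ×ˢ S).image gen : Set (Additive (Abelianization (commutator G))))
  let σ := Subrepresentation.ofSubmodule' U
  let N : Subgroup G :=
    ((AddSubgroup.toSubgroup' σ.toSubmodule.toAddSubgroup).comap of).map (commutator G).subtype
  have hN : N.Normal := ⟨by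
    rintro _ ⟨c, hc, rfl⟩ g
    exact ⟨MulAut.conjNormal g c, σ.apply_mem_toSubmodule (of g) hc, rfl⟩⟩
  have hle : commutator G ≤ N := Subgroup.commutator_le_of_closure_eq_top hS fun a ha b hb =>
    ⟨_, Submodule.subset_span (Finset.mem_image_of_mem gen (Finset.mk_mem_product ha hb)), rfl⟩
  refine ⟨⟨(S ×ˢ S).image gen, eq_top_iff.2 fun v _ => ?_⟩⟩
  obtain ⟨c, rfl⟩ : ∃ c : commutator G, Additive.ofMul (of c) = v :=
    ⟨_, congrArg Additive.ofMul (QuotientGroup.mk_surjective (Additive.toMul v)).choose_spec⟩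
  obtain ⟨c', hc', hcc'⟩ := hle c.2
  rw [Subtype.ext hcc'] at hc'
  exact hc'

theorem fg_map_of_le_center [Group.FG G] {M : Subgroup (commutator G)}
    (hM : M.map (commutator G).subtype ≤ Subgroup.center G) : (M.map of).FG := by
  let Y : Submodule ℤ (Additive (Abelianization (commutator G))) :=
    (Subgroup.toAddSubgroup (M.map of)).toIntSubmodule
  have hY : Y ≤ (commutatorRep G).invariants := by
    rintro _ ⟨c, hc, rfl⟩ g
    induction g using QuotientGroup.induction_on with | H g => ?_
    have hc' : (c : G) ∈ Subgroup.center G := hM ⟨c, hc, rfl⟩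
    have hcg : MulAut.conjNormal g c = c := Subtype.ext <| by
      rw [MulAut.conjNormal_apply, Subgroup.mem_center_iff.1 hc' g, mul_inv_cancel_right]
    exact congrArg (fun c => Additive.ofMul (of c)) hcg
  have hYfg := Representation.fg_of_le_invariants (commutatorRep G) hY
  rwa [Submodule.fg_iff_addSubgroup_fg, AddSubgroup.toIntSubmodule_toAddSubgroup,
    ← Subgroup.fg_iff_add_fg] at hYfg

end Abelianization

namespace Subgroup

variable {G : Type*} [Group G]

theorem fg_of_le_commutator_inf_center [Group.FG G] {M : Subgroup G}
    (hM : M ≤ _root_.commutator G ⊓ center G)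
    (hM₂ : (M ⊓ ⁅_root_.commutator G, _root_.commutator G⁆).FG) : M.FG := by
  set C := _root_.commutator G
  have hMC : M ≤ C := hM.trans inf_le_left
  have hCC : ⁅C, C⁆.subgroupOf C = _root_.commutator C := by
    rw [← map_subtype_commutator, subgroupOf, comap_map_eq_self_of_injective C.subtype_injective]
  rw [← fg_subgroupOf_iff hMC]
  refine fg_of_fg_map_of_fg_inf_ker Abelianization.of (Abelianization.fg_map_of_le_center ?_) ?_
  · rw [subgroupOf_map_subtype, inf_eq_left.2 hMC]
    exact hM.trans inf_le_right
  · rwa [Abelianization.ker_of, ← hCC, ← inf_subgroupOf,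
      fg_subgroupOf_iff (inf_le_left.trans hMC)]

theorem fg_of_le_commutator_of_le_centralizer {W M : Subgroup G} (hW : W.FG)
    (hMW : M ≤ ⁅W, W⁆) (hMc : M ≤ centralizer W) (hM₂ : (M ⊓ ⁅⁅W, W⁆, ⁅W, W⁆⁆).FG) :
    M.FG := by
  have : Group.FG W := (Group.fg_iff_subgroup_fg W).2 hW
  have hMW' : M ≤ W := hMW.trans (commutator_le_self W)
  have hWW : ⁅W, W⁆.subgroupOf W = _root_.commutator W := by
    rw [← map_subtype_commutator, subgroupOf, comap_map_eq_self_of_injective W.subtype_injective]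
  have hWWWW :
      ⁅⁅W, W⁆, ⁅W, W⁆⁆.subgroupOf W = ⁅_root_.commutator W, _root_.commutator W⁆ := by
    rw [← map_subtype_commutator W, ← map_commutator, subgroupOf,
      comap_map_eq_self_of_injective W.subtype_injective]
  rw [← fg_subgroupOf_iff hMW']
  refine fg_of_le_commutator_inf_center (le_inf ?_ fun x hx => ?_) ?_
  · exact hWW ▸ fun x hx => hMW hx
  · exact mem_center_iff.2 fun y => Subtype.ext (mem_centralizer_iff.1 (hMc hx) y y.2)
  · rwa [← hWWWW, ← inf_subgroupOf, fg_subgroupOf_iff (inf_le_left.trans hMW')]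

end Subgroup

theorem commutatorElement_mul_mul_of_mem_center {G : Type*} [Group G] {z z' : G}
    (hz : z ∈ Subgroup.center G) (hz' : z' ∈ Subgroup.center G) (a b : G) :
    ⁅a * z, b * z'⁆ = ⁅a, b⁆ := by
  have h₁ : ⁅z, b * z'⁆ = 1 :=
    commutatorElement_eq_one_iff_mul_comm.2 (Subgroup.mem_center_iff.1 hz _).symm
  have h₂ : ⁅a, z'⁆ = 1 :=
    commutatorElement_eq_one_iff_mul_comm.2 (Subgroup.mem_center_iff.1 hz' a)
  rw [commutatorElement_mul_left_eq_conj_mul, h₁, mul_one, mul_inv_cancel, one_mul,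
    commutatorElement_mul_right_eq_mul_conj, h₂, mul_one, mul_inv_cancel_right]

theorem IsNoetherianGroup.fg_of_le_commutator {G : Type*} [Group G] {K L : Subgroup G}
    (hK : IsNoetherianGroup (commutator K)) (hL : L ≤ ⁅K, K⁆) : L.FG := by
  have hLK : L ≤ K := hL.trans (Subgroup.commutator_le_self K)
  rw [← Subgroup.map_subtype_commutator] at hL
  have hLK' : L.subgroupOf K ≤ commutator K := fun x hx =>
    (Subgroup.mem_map_iff_mem K.subtype_injective).1 (hL hx)
  rw [← Subgroup.fg_subgroupOf_iff hLK, ← Subgroup.fg_subgroupOf_iff hLK']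
  exact hK _

namespace MonoidHom

section

variable {Q H : Type*} [Group Q] [Group H] (π : Q →* H)

theorem exists_fg_map_eq_top [hH : Group.FG H] (hπ : Function.Surjective π) :
    ∃ W : Subgroup Q, W.FG ∧ W.map π = ⊤ := by
  obtain ⟨T, hT⟩ := Group.fg_iff.1 hH
  refine ⟨Subgroup.closure (Function.surjInv hπ '' T),
    (Subgroup.fg_iff _).2 ⟨_, rfl, hT.2.image _⟩, ?_⟩
  rw [MonoidHom.map_closure, Set.image_image]
  simp [Function.surjInv_eq hπ, hT.1]

theorem commutator_le_of_map_eq_top (hker : π.ker ≤ Subgroup.center Q) {W : Subgroup Q}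
    (hW : W.map π = ⊤) : commutator Q ≤ ⁅W, W⁆ := by
  have hsplit (a : Q) : ∃ w ∈ W, ∃ z ∈ Subgroup.center Q, w * z = a := by
    obtain ⟨w, hw, hwa⟩ := hW.ge (Subgroup.mem_top (π a))
    exact ⟨w, hw, w⁻¹ * a, hker (by simp [hwa]), mul_inv_cancel_left w a⟩
  rw [commutator_def, Subgroup.commutator_le]
  intro a _ b _
  obtain ⟨w, hw, z, hz, rfl⟩ := hsplit a
  obtain ⟨w', hw', z', hz', rfl⟩ := hsplit b
  rw [commutatorElement_mul_mul_of_mem_center hz hz']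
  exact Subgroup.commutator_mem_commutator hw hw'

theorem commutator_commutator_le_commutator_inf_comap {W : Subgroup Q} (hW : W.map π = ⊤) :
    ⁅⁅W, W⁆, ⁅W, W⁆⁆ ≤ ⁅W ⊓ (commutator H).comap π, W ⊓ (commutator H).comap π⁆ := by
  have hWW : ⁅W, W⁆ ≤ W ⊓ (commutator H).comap π := by
    refine le_inf (Subgroup.commutator_le_self W) ?_
    rw [← Subgroup.map_le_iff_le_comap, Subgroup.map_commutator, hW, commutator_def]
  exact Subgroup.commutator_mono hWW hWW

end

section

variable {Q : Type u} {H : Type*} [Group Q] [Group H] (π : Q →* H)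

theorem isNoetherianGroup_commutator_inf_comap (hker : π.ker ≤ Subgroup.center Q)
    (hyp : ∀ (G : Type u) [Group G] (φ : G →* ↥(commutator H)),
      Function.Surjective φ → φ.ker ≤ Subgroup.center G → IsNoetherianGroup ↥(commutator G))
    {W : Subgroup Q} (hW : W.map π = ⊤) :
    IsNoetherianGroup (commutator ↥(W ⊓ (commutator H).comap π)) := by
  set K := W ⊓ (commutator H).comap π
  refine hyp K ((π.comp K.subtype).codRestrict _ fun g => g.2.2) ?_ fun x hx => ?_
  · rintro ⟨h, hh⟩
    obtain ⟨w, hw, rfl⟩ := hW.ge (Subgroup.mem_top h)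
    exact ⟨⟨w, hw, hh⟩, rfl⟩
  · have hx : π x = 1 := congrArg Subtype.val hx
    exact Subgroup.mem_center_iff.2 fun g => Subtype.ext (Subgroup.mem_center_iff.1 (hker hx) g)

theorem fg_of_le_commutator_inf_ker [Group.FG H] (hπ : Function.Surjective π)
    (hker : π.ker ≤ Subgroup.center Q)
    (hyp : ∀ (G : Type u) [Group G] (φ : G →* ↥(commutator H)),
      Function.Surjective φ → φ.ker ≤ Subgroup.center G → IsNoetherianGroup ↥(commutator G))
    {M : Subgroup Q} (hM : M ≤ commutator Q ⊓ π.ker) : M.FG := by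
  obtain ⟨W, hWfg, hW⟩ := π.exists_fg_map_eq_top hπ
  have hMW : M ≤ ⁅W, W⁆ :=
    hM.trans (inf_le_left.trans (π.commutator_le_of_map_eq_top hker hW))
  have hMc : M ≤ Subgroup.centralizer W :=
    (hM.trans (inf_le_right.trans hker)).trans (Subgroup.center_le_centralizer _)
  refine Subgroup.fg_of_le_commutator_of_le_centralizer hWfg hMW hMc ?_
  exact (π.isNoetherianGroup_commutator_inf_comap hker hyp hW).fg_of_le_commutator
    (inf_le_right.trans (π.commutator_commutator_le_commutator_inf_comap hW))

end

end MonoidHom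

theorem QuotientGroup.map_mk'_le_center {F : Type*} [Group F] (R : Subgroup F) [R.Normal] :
    R.map (QuotientGroup.mk' ⁅(⊤ : Subgroup F), R⁆) ≤
      Subgroup.center (F ⧸ ⁅(⊤ : Subgroup F), R⁆) := by
  rintro _ ⟨r, hr, rfl⟩
  refine Subgroup.mem_center_iff.2 fun q => ?_
  induction q using QuotientGroup.induction_on with | H f => ?_
  rw [← commutatorElement_eq_one_iff_mul_comm, ← QuotientGroup.mk'_apply,
    ← map_commutatorElement, QuotientGroup.mk'_apply, QuotientGroup.eq_one_iff]
  exact Subgroup.commutator_mem_commutator (Subgroup.mem_top f) hr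

/-- Let `H` be a Noetherian group. If for every central extension `G` of the derived subgroup
`[H, H]` the commutator subgroup `[G, G]` is Noetherian, then the Schur multiplier of `H` is
finitely generated. -/
theorem fg_schurMultiplier_of_noetherian_commutator_of_central_extensions
    {H : Type u} [Group H] (hH : IsNoetherianGroup H)
    (hyp : ∀ (G : Type u) [Group G] (φ : G →* ↥(commutator H)),
      Function.Surjective φ → φ.ker ≤ Subgroup.center G →
        IsNoetherianGroup ↥(commutator G)) :
    Group.FG ↥(SchurMultiplier H) := by
  set R := (FreeGroup.lift (id : H → H)).ker
  let π := QuotientGroup.lift ⁅⊤, R⁆ (FreeGroup.lift (id : H → H))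
    (Subgroup.commutator_le_right ⊤ R)
  have hker : π.ker = R.map (QuotientGroup.mk' ⁅⊤, R⁆) := QuotientGroup.ker_lift _ _ _
  have hπ : Function.Surjective π := QuotientGroup.lift_surjective_of_surjective _ _
    (FreeGroup.lift_surjective_of_surjective Function.surjective_id) _
  have hcentral : π.ker ≤ Subgroup.center _ := hker ▸ QuotientGroup.map_mk'_le_center R
  have hM : SchurMultiplier H ≤ commutator _ ⊓ π.ker :=
    le_inf ((Subgroup.map_mono inf_le_right).trans
        ((map_commutator_eq _ _).trans_le (Subgroup.commutator_mono le_top le_top)))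
      (hker ▸ Subgroup.map_mono inf_le_left)
  have : Group.FG H := ⟨hH ⊤⟩
  rw [Group.fg_iff_subgroup_fg]
  exact π.fg_of_le_commutator_inf_ker hπ hcentral hyp hM
end
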